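/- arXiv:1310.1777 — 2 statements merged into one kernel-verified Lean document; each statement's English description precedes it below -/
import Mathlib

section
/- For a matroid with independent random costs, Var(C*) = ∫∫ Cov(rk(A(s)), rk(A(t))) ds dt, integrated over the support of the cost distributions (over [0,1]² for U(0,1) costs). -/
open MeasureTheory ProbabilityTheory ENNReal
open scoped BigOperators

variable {A : Type*} [Fintype A] [DecidableEq A]

/-- The nominal cost of a structure `S`: the sum of the item costs. -/
noncomputable def structCost (c : A → ℝ≥0∞) (S : Finset A) : ℝ≥0∞ :=
  ∑ a ∈ S, c a

/-- The minimum cost `c*(I)` over all desired structures. -/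
noncomputable def cstar (SS : Finset (Finset A)) (c : A → ℝ≥0∞) : ℝ≥0∞ :=
  ⨅ S ∈ SS, structCost c S

/-- The VCG threshold `v(I,a) = c*(I_a^∞) - c*(I_a^0)`. -/
noncomputable def vth (SS : Finset (Finset A)) (c : A → ℝ≥0∞) (a : A) : ℝ≥0∞ :=
  cstar SS (Function.update c a ⊤) - cstar SS (Function.update c a 0)

/-- The incentive payment `p(a) = c*(I_a^∞) - c*(I)`. -/
noncomputable def pay (SS : Finset (Finset A)) (c : A → ℝ≥0∞) (a : A) : ℝ≥0∞ :=
  cstar SS (Function.update c a ⊤) - cstar SS c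

/-- `S` is a minimum structure. -/
def IsMinStruct (SS : Finset (Finset A)) (c : A → ℝ≥0∞) (S : Finset A) : Prop :=
  S ∈ SS ∧ ∀ T ∈ SS, structCost c S ≤ structCost c T

/-- The total VCG cost `C_VCG = C* + Σ_a p(a)`. -/
noncomputable def cvcg (SS : Finset (Finset A)) (c : A → ℝ≥0∞) : ℝ≥0∞ :=
  cstar SS c + ∑ a, pay SS c a

/-- A matroid on finite ground set `A`, given by its rank function. -/
structure RankMatroid (A : Type*) [Fintype A] [DecidableEq A] where
  rk : Finset A → ℕ
  rk_le_card : ∀ S : Finset A, rk S ≤ S.card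
  rk_mono : ∀ ⦃S T : Finset A⦄, S ⊆ T → rk S ≤ rk T
  rk_submodular : ∀ S T : Finset A, rk (S ∪ T) + rk (S ∩ T) ≤ rk S + rk T

namespace RankMatroid

variable {A : Type*} [Fintype A] [DecidableEq A]

/-- The collection of bases of the matroid. -/
noncomputable def bases (M : RankMatroid A) : Finset (Finset A) :=
  Finset.univ.filter (fun S => M.rk S = S.card ∧ M.rk S = M.rk Finset.univ)

/-- A set is independent if its rank equals its cardinality. -/
def Indep (M : RankMatroid A) (S : Finset A) : Prop := M.rk S = S.card

/-- A matroid is bridgeless if no single element removal decreases the rank of the ground set. -/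
def Bridgeless (M : RankMatroid A) : Prop :=
  ∀ a : A, M.rk (Finset.univ.erase a) = M.rk Finset.univ

/-- `β(S)`: the number of bridges in `S`. -/
def beta (M : RankMatroid A) (S : Finset A) : ℕ :=
  (S.filter (fun a => M.rk (S.erase a) < M.rk S)).card

end RankMatroid

/-- `A(t)`: the set of items with cost at most `t`. -/
noncomputable def Aset {A : Type*} [Fintype A] [DecidableEq A] (c : A → ℝ) (t : ℝ) : Finset A :=
  Finset.univ.filter (fun a => c a ≤ t)

set_option maxHeartbeats 1000000

namespace RankMatroid
variable (M : RankMatroid A)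

lemma rk_insert_le (a : A) (S : Finset A) : M.rk (insert a S) ≤ M.rk S + 1 := by
  have h := M.rk_submodular S {a}
  have h1 : M.rk {a} ≤ 1 := by simpa using M.rk_le_card {a}
  have : S ∪ {a} = insert a S := by rw [Finset.insert_eq, Finset.union_comm]
  rw [this] at h
  omega

lemma rk_union_le_add_card (S T : Finset A) :
    M.rk (S ∪ T) ≤ M.rk S + (T \ S).card := by
  classical
  induction T using Finset.induction_on with
  | empty => simp
  | @insert a T ha ih =>
    by_cases haS : a ∈ S
    · have h1 : S ∪ insert a T = S ∪ T := by
        rw [Finset.union_insert, Finset.insert_eq_self.mpr (Finset.mem_union_left T haS)]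
      have h2 : insert a T \ S = T \ S := by
        ext x
        simp only [Finset.mem_sdiff, Finset.mem_insert]
        constructor
        · rintro ⟨rfl | h, hs⟩
          · exact absurd haS hs
          · exact ⟨h, hs⟩
        · rintro ⟨h, hs⟩; exact ⟨Or.inr h, hs⟩
      rw [h1, h2]; exact ih
    · have h1 : S ∪ insert a T = insert a (S ∪ T) := Finset.union_insert ..
      have h2 : insert a T \ S = insert a (T \ S) := by
        ext x
        simp only [Finset.mem_sdiff, Finset.mem_insert]
        constructor
        · rintro ⟨rfl | h, hs⟩
          · exact Or.inl rfl
          · exact Or.inr ⟨h, hs⟩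
        · rintro (rfl | ⟨h, hs⟩)
          · exact ⟨Or.inl rfl, haS⟩
          · exact ⟨Or.inr h, hs⟩
      rw [h1, h2, Finset.card_insert_of_notMem (by simp [ha])]
      have := M.rk_insert_le a (S ∪ T)
      omega

/-- Subsets of independent sets are independent. -/
lemma indep_subset {B S : Finset A} (hB : M.rk B = B.card) (hSB : S ⊆ B) :
    M.rk S = S.card := by
  have h1 : M.rk S ≤ S.card := M.rk_le_card S
  have h2 : M.rk (S ∪ B) ≤ M.rk S + (B \ S).card := M.rk_union_le_add_card S B
  have h3 : S ∪ B = B := Finset.union_eq_right.mpr hSB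
  have h4 : (B \ S).card = B.card - S.card := Finset.card_sdiff_of_subset hSB
  have h5 : S.card ≤ B.card := Finset.card_le_card hSB
  rw [h3, hB] at h2
  omega

/-- Augmentation. -/
lemma exists_insert {I S : Finset A} (hIS : I ⊆ S) (hI : M.rk I = I.card)
    (h : I.card < M.rk S) :
    ∃ a ∈ S, a ∉ I ∧ M.rk (insert a I) = I.card + 1 := by
  classical
  by_contra hcon
  push_neg at hcon
  have key : ∀ a ∈ S, a ∉ I → M.rk (insert a I) = M.rk I := by
    intro a haS haI
    have h1 := M.rk_insert_le a I
    have h2 : M.rk I ≤ M.rk (insert a I) := M.rk_mono (Finset.subset_insert a I)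
    have h3 := hcon a haS haI
    omega
  have main : ∀ T : Finset A, T ⊆ S → M.rk (I ∪ T) = M.rk I := by
    intro T
    induction T using Finset.induction_on with
    | empty => simp
    | @insert a T ha ih =>
      intro hsub
      have hTS : T ⊆ S := fun x hx => hsub (Finset.mem_insert_of_mem hx)
      have haS : a ∈ S := hsub (Finset.mem_insert_self a T)
      by_cases haI : a ∈ I
      · have : I ∪ insert a T = I ∪ T := by
          rw [Finset.union_insert, Finset.insert_eq_self.mpr (Finset.mem_union_left T haI)]
        rw [this]; exact ih hTS
      · have hsm := M.rk_submodular (I ∪ T) (insert a I)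
        have hu : (I ∪ T) ∪ insert a I = I ∪ insert a T := by
          ext x; simp only [Finset.mem_union, Finset.mem_insert]; tauto
        have hi : I ⊆ (I ∪ T) ∩ insert a I := by
          intro x hx; simp [Finset.mem_inter, Finset.mem_union, hx, Finset.mem_insert]
        have h5 : M.rk I ≤ M.rk ((I ∪ T) ∩ insert a I) := M.rk_mono hi
        have h6 : M.rk (I ∪ insert a T) ≥ M.rk I := M.rk_mono Finset.subset_union_left
        rw [hu, ih hTS, key a haS haI] at hsm
        omega
  have := main S (Finset.Subset.refl S)
  rw [Finset.union_eq_right.mpr hIS] at this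
  omega

/-- Independent sets extend to bases of supersets. -/
lemma exists_extend {I S : Finset A} (hIS : I ⊆ S) (hI : M.rk I = I.card) :
    ∃ B, I ⊆ B ∧ B ⊆ S ∧ M.rk B = B.card ∧ B.card = M.rk S := by
  classical
  by_cases h : M.rk S ≤ I.card
  · refine ⟨I, Finset.Subset.refl I, hIS, hI, ?_⟩
    have : M.rk I ≤ M.rk S := M.rk_mono hIS
    omega
  · push_neg at h
    obtain ⟨a, haS, haI, hins⟩ := M.exists_insert hIS hI h
    have hcard : (insert a I).card = I.card + 1 := Finset.card_insert_of_notMem haI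
    have hsub : insert a I ⊆ S := Finset.insert_subset haS hIS
    have := exists_extend hsub (by rw [hins, hcard])
    obtain ⟨B, h1, h2, h3, h4⟩ := this
    exact ⟨B, (Finset.subset_insert a I).trans h1, h2, h3, h4⟩
termination_by M.rk S - I.card
decreasing_by
  simp only [hcard]
  omega

lemma bases_nonempty : M.bases.Nonempty := by
  obtain ⟨B, _, _, h3, h4⟩ := M.exists_extend (Finset.empty_subset Finset.univ)
    (by simpa using Nat.le_zero.mp (by simpa using M.rk_le_card ∅))
  exact ⟨B, by simp [bases, h3, h4]⟩

/-- Existence of a basis adapted to a sorted chain of thresholds. -/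
lemma exists_adapted_aux (c : A → ℝ) :
    ∀ (l : List ℝ), l.Pairwise (· ≤ ·) → ∀ I : Finset A, M.rk I = I.card →
      (∀ v ∈ l, I ⊆ Aset c v) →
      ∃ B, I ⊆ B ∧ M.rk B = B.card ∧ B.card = M.rk Finset.univ ∧
        ∀ v ∈ l, (B ∩ Aset c v).card = M.rk (Aset c v) := by
  intro l
  induction l with
  | nil =>
    intro _ I hI _
    obtain ⟨B, h1, _, h3, h4⟩ := M.exists_extend (Finset.subset_univ I) hI
    exact ⟨B, h1, h3, h4, by simp⟩
  | cons v0 l ih =>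
    intro hsort I hI hIsub
    have hIv0 : I ⊆ Aset c v0 := hIsub v0 List.mem_cons_self
    obtain ⟨I0, hII0, hI0sub, hI0ind, hI0card⟩ := M.exists_extend hIv0 hI
    have hsort' : l.Pairwise (· ≤ ·) := hsort.of_cons
    have hmono : ∀ v ∈ l, Aset c v0 ⊆ Aset c v := by
      intro v hv a ha
      simp only [Aset, Finset.mem_filter] at ha ⊢
      exact ⟨ha.1, ha.2.trans (List.rel_of_pairwise_cons hsort hv)⟩
    obtain ⟨B, hI0B, hBind, hBcard, hBad⟩ := ih hsort' I0 hI0ind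
      (fun v hv => hI0sub.trans (hmono v hv))
    refine ⟨B, hII0.trans hI0B, hBind, hBcard, ?_⟩
    intro v hv
    rcases List.mem_cons.mp hv with rfl | hv'
    · have hle : (B ∩ Aset c v).card ≤ M.rk (Aset c v) := by
        have hind := M.indep_subset hBind (Finset.inter_subset_left (s₂ := Aset c v))
        rw [← hind]
        exact M.rk_mono (Finset.inter_subset_right)
      have hge : M.rk (Aset c v) ≤ (B ∩ Aset c v).card := by
        rw [← hI0card]
        apply Finset.card_le_card
        exact Finset.subset_inter hI0B hI0sub
      omega
    · exact hBad v hv'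

/-- Existence of a basis adapted to all thresholds of `Aset c`. -/
lemma exists_adapted (c : A → ℝ) :
    ∃ B ∈ M.bases, ∀ t : ℝ, (B ∩ Aset c t).card = M.rk (Aset c t) := by
  classical
  set l := (Finset.image c Finset.univ).sort (· ≤ ·) with hl
  have hsort : l.Pairwise (· ≤ ·) := Finset.pairwise_sort _ _
  obtain ⟨B, _, hBind, hBcard, hBad⟩ := M.exists_adapted_aux c l hsort ∅
    (by simpa using Nat.le_zero.mp (by simpa using M.rk_le_card ∅)) (by simp)
  refine ⟨B, by simp [bases, hBind, hBcard], ?_⟩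
  intro t
  by_cases hne : ((Finset.image c Finset.univ).filter (· ≤ t)).Nonempty
  · set v := ((Finset.image c Finset.univ).filter (· ≤ t)).max' hne with hv
    have hvmem : v ∈ (Finset.image c Finset.univ).filter (· ≤ t) := Finset.max'_mem _ hne
    have hvl : v ∈ l := by
      rw [hl, Finset.mem_sort]
      exact (Finset.mem_filter.mp hvmem).1
    have heq : Aset c t = Aset c v := by
      ext a
      simp only [Aset, Finset.mem_filter, Finset.mem_univ, true_and]
      constructor
      · intro h
        exact Finset.le_max' _ (c a) (by simp [Finset.mem_filter, h])
      · intro h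
        exact h.trans (Finset.mem_filter.mp hvmem).2
    rw [heq]
    exact hBad v hvl
  · have : Aset c t = ∅ := by
      ext a
      simp only [Aset, Finset.mem_filter, Finset.mem_univ, true_and, Finset.notMem_empty,
        iff_false]
      intro h
      exact hne ⟨c a, by simp [Finset.mem_filter, h]⟩
    simp [this]
    have : M.rk (∅ : Finset A) ≤ 0 := by simpa using M.rk_le_card ∅
    omega

end RankMatroid


lemma Aset_mono (c : A → ℝ) : Monotone (Aset c) := by
  intro s t hst a ha
  simp only [Aset, Finset.mem_filter] at ha ⊢
  exact ⟨ha.1, ha.2.trans hst⟩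

lemma integral_indicator_lt {v : ℝ} (h0 : 0 < v) (h1 : v < 1) :
    ∫ t in (0:ℝ)..1, (if t < v then (1:ℝ) else 0) = v := by
  have hfun : (fun t : ℝ => if t < v then (1:ℝ) else 0)
      = Set.indicator (Set.Iio v) (fun _ => (1:ℝ)) := by
    ext t
    simp [Set.indicator_apply, Set.mem_Iio]
  rw [intervalIntegral.integral_of_le zero_le_one, hfun,
    MeasureTheory.integral_indicator measurableSet_Iio]
  rw [MeasureTheory.setIntegral_const, measureReal_def, Measure.restrict_apply measurableSet_Iio]
  have hset : Set.Iio v ∩ Set.Ioc 0 1 = Set.Ioo 0 v := by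
    ext t
    simp only [Set.mem_inter_iff, Set.mem_Iio, Set.mem_Ioc, Set.mem_Ioo]
    constructor
    · rintro ⟨h, h2, h3⟩; exact ⟨h2, h⟩
    · rintro ⟨h2, h⟩; exact ⟨h, h2, (h.trans h1).le⟩
  rw [hset]
  simp [Real.volume_Ioo, ENNReal.toReal_ofReal h0.le]

lemma sum_eq_integral_card (c : A → ℝ) (h01 : ∀ a, c a ∈ Set.Ioo (0:ℝ) 1) (B : Finset A) :
    ∑ a ∈ B, c a = ∫ t in (0:ℝ)..1, ((B \ Aset c t).card : ℝ) := by
  have hcard : ∀ t : ℝ, ((B \ Aset c t).card : ℝ) = ∑ a ∈ B, (if t < c a then (1:ℝ) else 0) := by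
    intro t
    have h1 : B \ Aset c t = B.filter (fun a => t < c a) := by
      ext a
      simp only [Finset.mem_sdiff, Finset.mem_filter, Aset, Finset.mem_univ, true_and, not_le]
    rw [h1]
    rw [Finset.card_filter]
    push_cast
    rfl
  have hswap : ∫ t in (0:ℝ)..1, ((B \ Aset c t).card : ℝ)
      = ∑ a ∈ B, ∫ t in (0:ℝ)..1, (if t < c a then (1:ℝ) else 0) := by
    rw [← intervalIntegral.integral_finset_sum]
    · congr 1
      ext t
      exact hcard t
    · intro a _
      apply AntitoneOn.intervalIntegrable
      intro s _ t _ hst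
      by_cases h : t < c a
      · simp [h, hst.trans_lt h]
      · by_cases h2 : s < c a <;> simp [h, h2]
  rw [hswap]
  apply Finset.sum_congr rfl
  intro a _
  exact (integral_indicator_lt (h01 a).1 (h01 a).2).symm


section Key
variable {A : Type*} [Fintype A] [DecidableEq A] (M : RankMatroid A)

lemma rkAset_intervalIntegrable (c : A → ℝ) :
    IntervalIntegrable (fun t => (M.rk (Aset c t) : ℝ)) volume 0 1 := by
  apply MonotoneOn.intervalIntegrable
  intro s _ t _ hst
  dsimp only
  exact_mod_cast M.rk_mono (Aset_mono c hst)

lemma structCost_toReal (c : A → ℝ) (h0 : ∀ a, 0 ≤ c a) (B : Finset A) :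
    (structCost (fun a => ENNReal.ofReal (c a)) B).toReal = ∑ a ∈ B, c a := by
  rw [structCost, ENNReal.toReal_sum (fun a _ => ENNReal.ofReal_ne_top)]
  exact Finset.sum_congr rfl fun a _ => ENNReal.toReal_ofReal (h0 a)

lemma basis_cost_ge (c : A → ℝ) (h01 : ∀ a, c a ∈ Set.Ioo (0:ℝ) 1)
    {B : Finset A} (hB : B ∈ M.bases) :
    (M.rk Finset.univ : ℝ) - ∫ t in (0:ℝ)..1, (M.rk (Aset c t) : ℝ) ≤ ∑ a ∈ B, c a := by
  simp only [RankMatroid.bases, Finset.mem_filter] at hB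
  obtain ⟨-, hBind, hBrk⟩ := hB
  rw [sum_eq_integral_card c h01 B]
  have hconst : (M.rk Finset.univ : ℝ)
      = ∫ t in (0:ℝ)..1, (M.rk Finset.univ : ℝ) := by
    simp
  rw [hconst, ← intervalIntegral.integral_sub (by apply intervalIntegrable_const)
    (rkAset_intervalIntegrable M c)]
  apply intervalIntegral.integral_mono_on zero_le_one
  · exact ((intervalIntegrable_const (c := (M.rk Finset.univ : ℝ))).sub
      (rkAset_intervalIntegrable M c))
  · apply AntitoneOn.intervalIntegrable
    intro s _ t _ hst
    dsimp only
    exact_mod_cast Finset.card_le_card (Finset.sdiff_subset_sdiff (Finset.Subset.refl B)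
      (Aset_mono c hst))
  · intro t _
    have key : M.rk Finset.univ ≤ M.rk (Aset c t) + (B \ Aset c t).card := by
      have h1 : M.rk Finset.univ ≤ M.rk (Aset c t ∪ B) := by
        have : M.rk B ≤ M.rk (Aset c t ∪ B) := M.rk_mono Finset.subset_union_right
        have h2 : M.rk (Aset c t ∪ B) ≤ M.rk Finset.univ := M.rk_mono (Finset.subset_univ _)
        omega
      exact h1.trans (M.rk_union_le_add_card _ _)
    have := Nat.cast_le (α := ℝ) |>.mpr key
    push_cast at this ⊢
    linarith

lemma basis_cost_adapted (c : A → ℝ) (h01 : ∀ a, c a ∈ Set.Ioo (0:ℝ) 1)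
    {B : Finset A} (hB : B ∈ M.bases)
    (had : ∀ t : ℝ, (B ∩ Aset c t).card = M.rk (Aset c t)) :
    ∑ a ∈ B, c a
      = (M.rk Finset.univ : ℝ) - ∫ t in (0:ℝ)..1, (M.rk (Aset c t) : ℝ) := by
  simp only [RankMatroid.bases, Finset.mem_filter] at hB
  obtain ⟨-, hBind, hBrk⟩ := hB
  rw [sum_eq_integral_card c h01 B]
  have hpt : ∀ t : ℝ, ((B \ Aset c t).card : ℝ)
      = (M.rk Finset.univ : ℝ) - (M.rk (Aset c t) : ℝ) := by
    intro t
    have h1 : (B \ Aset c t).card + (B ∩ Aset c t).card = B.card :=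
      Finset.card_sdiff_add_card_inter B (Aset c t)
    have h2 := had t
    have h3 : B.card = M.rk Finset.univ := by omega
    have : (B \ Aset c t).card = M.rk Finset.univ - M.rk (Aset c t) := by omega
    rw [this]
    have h4 : M.rk (Aset c t) ≤ M.rk Finset.univ := M.rk_mono (Finset.subset_univ _)
    push_cast [Nat.cast_sub h4]
    ring
  rw [intervalIntegral.integral_congr (g := fun t => (M.rk Finset.univ : ℝ) - (M.rk (Aset c t) : ℝ))
    (fun t _ => hpt t)]
  rw [intervalIntegral.integral_sub (by apply intervalIntegrable_const)
    (rkAset_intervalIntegrable M c)]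
  simp

/-- The key deterministic formula. -/
lemma cstar_toReal_eq (c : A → ℝ) (h01 : ∀ a, c a ∈ Set.Ioo (0:ℝ) 1) :
    (cstar M.bases (fun a => ENNReal.ofReal (c a))).toReal
      = (M.rk Finset.univ : ℝ) - ∫ t in (0:ℝ)..1, (M.rk (Aset c t) : ℝ) := by
  have h0 : ∀ a, 0 ≤ c a := fun a => (h01 a).1.le
  have hcs : cstar M.bases (fun a => ENNReal.ofReal (c a))
      = M.bases.inf (structCost (fun a => ENNReal.ofReal (c a))) :=
    (Finset.inf_eq_iInf _ _).symm
  obtain ⟨B₀, hB₀mem, hB₀⟩ := Finset.exists_mem_eq_inf M.bases M.bases_nonempty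
    (structCost (fun a => ENNReal.ofReal (c a)))
  obtain ⟨Bs, hBsmem, hBsad⟩ := M.exists_adapted c
  apply le_antisymm
  · calc (cstar M.bases (fun a => ENNReal.ofReal (c a))).toReal
        ≤ (structCost (fun a => ENNReal.ofReal (c a)) Bs).toReal := by
          apply ENNReal.toReal_mono
          · rw [structCost]
            exact (ENNReal.sum_lt_top.2 fun a _ => ENNReal.ofReal_lt_top).ne
          · rw [hcs]
            exact Finset.inf_le hBsmem
      _ = ∑ a ∈ Bs, c a := structCost_toReal c h0 Bs
      _ = _ := basis_cost_adapted M c h01 hBsmem hBsad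
  · rw [hcs, hB₀, structCost_toReal c h0 B₀]
    exact basis_cost_ge M c h01 hB₀mem
end Key


lemma variance_congr_ae {Ω : Type*} [MeasurableSpace Ω] {μ : Measure Ω} {f g : Ω → ℝ}
    (h : f =ᵐ[μ] g) : variance f μ = variance g μ := by
  have hint : ∫ x, f x ∂μ = ∫ x, g x ∂μ := integral_congr_ae h
  simp only [ProbabilityTheory.variance, ProbabilityTheory.evariance]
  congr 1
  apply lintegral_congr_ae
  filter_upwards [h] with ω hω
  rw [hω, hint]


/-- For a matroid with i.i.d. `U(0,1)` costs,
`Var(C*) = ∫_0^1 ∫_0^1 Cov(rk(A(s)), rk(A(t))) ds dt`. -/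
theorem variance_nominal_integral_of_covariances
    {Ω : Type*} [MeasurableSpace Ω] (μ : Measure Ω) [IsProbabilityMeasure μ]
    (M : RankMatroid A)
    (X : A → Ω → ℝ) (hX : ∀ a, Measurable (X a))
    (hindep : iIndepFun X μ)
    (hdist : ∀ a, μ.map (X a) = volume.restrict (Set.Ioo (0:ℝ) 1))
    (CstarR : Ω → ℝ)
    (hCstar : CstarR = fun ω => (cstar M.bases (fun a => ENNReal.ofReal (X a ω))).toReal)
    (R : ℝ → Ω → ℝ) (hR : R = fun t ω => (M.rk (Aset (fun a => X a ω) t) : ℝ)) :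
    variance CstarR μ
      = ∫ s in (0:ℝ)..1, ∫ t in (0:ℝ)..1,
          ∫ ω, (R s ω - ∫ ω', R s ω' ∂μ) * (R t ω - ∫ ω', R t ω' ∂μ) ∂μ := by
  classical
  subst hR
  set rkU : ℝ := (M.rk Finset.univ : ℝ) with hrkU
  have hrkU0 : 0 ≤ rkU := Nat.cast_nonneg _
  set ν : Measure ℝ := volume.restrict (Set.Ioc (0:ℝ) 1) with hν
  haveI : IsFiniteMeasure ν := by
    constructor
    rw [hν, Measure.restrict_apply_univ, Real.volume_Ioc]
    simp
  have hνuniv : ν Set.univ = 1 := by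
    rw [hν, Measure.restrict_apply_univ, Real.volume_Ioc]
    norm_num
  set F : ℝ × Ω → ℝ := fun p => (M.rk (Aset (fun a => X a p.2) p.1) : ℝ) with hF
  -- measurability of F
  have hsetmeas : ∀ S : Finset A,
      MeasurableSet {p : ℝ × Ω | Aset (fun a => X a p.2) p.1 = S} := by
    intro S
    have : {p : ℝ × Ω | Aset (fun a => X a p.2) p.1 = S}
        = ⋂ a : A, {p : ℝ × Ω | X a p.2 ≤ p.1 ↔ a ∈ S} := by
      ext p
      simp only [Set.mem_setOf_eq, Set.mem_iInter]
      constructor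
      · intro h a
        rw [← h]
        simp [Aset]
      · intro h
        ext a
        simp only [Aset, Finset.mem_filter, Finset.mem_univ, true_and]
        exact h a
    rw [this]
    apply MeasurableSet.iInter
    intro a
    have hle : MeasurableSet {p : ℝ × Ω | X a p.2 ≤ p.1} :=
      measurableSet_le ((hX a).comp measurable_snd) measurable_fst
    by_cases haS : a ∈ S
    · have : {p : ℝ × Ω | X a p.2 ≤ p.1 ↔ a ∈ S} = {p : ℝ × Ω | X a p.2 ≤ p.1} := by
        ext p; simp [haS]
      rw [this]; exact hle
    · have : {p : ℝ × Ω | X a p.2 ≤ p.1 ↔ a ∈ S} = {p : ℝ × Ω | X a p.2 ≤ p.1}ᶜ := by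
        ext p; simp [haS]
      rw [this]; exact hle.compl
  have hFmeas : Measurable F := by
    have hFeq : F = fun p => ∑ S : Finset A,
        Set.indicator {p : ℝ × Ω | Aset (fun a => X a p.2) p.1 = S}
          (fun _ => (M.rk S : ℝ)) p := by
      funext p
      rw [Finset.sum_eq_single (Aset (fun a => X a p.2) p.1)]
      · simp [Set.indicator_apply, hF]
      · intro S _ hS
        simp [Set.indicator_apply, Ne.symm hS]
      · intro h
        exact absurd (Finset.mem_univ _) h
    rw [hFeq]
    apply Finset.measurable_sum
    intro S _
    exact measurable_const.indicator (hsetmeas S)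
  have hFb : ∀ p, ‖F p‖ ≤ rkU := by
    intro p
    rw [hF, hrkU, Real.norm_eq_abs, abs_of_nonneg (Nat.cast_nonneg _)]
    dsimp only
    exact_mod_cast M.rk_mono (Finset.subset_univ _)
  have hFslice : ∀ ω, Measurable (fun t => F (t, ω)) := fun ω =>
    hFmeas.comp (measurable_id.prodMk measurable_const)
  have hFslice2 : ∀ t, Measurable (fun ω => F (t, ω)) := fun t =>
    hFmeas.comp (measurable_const.prodMk measurable_id)
  set Y : Ω → ℝ := fun ω => ∫ t, F (t, ω) ∂ν with hY
  set m : ℝ → ℝ := fun t => ∫ ω, F (t, ω) ∂μ with hm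
  have hYmeas : StronglyMeasurable Y := hFmeas.stronglyMeasurable.integral_prod_left'
  have hmmeas : StronglyMeasurable m := hFmeas.stronglyMeasurable.integral_prod_right'
  have hYb : ∀ ω, ‖Y ω‖ ≤ rkU := by
    intro ω
    calc ‖Y ω‖ ≤ rkU * (ν Set.univ).toReal :=
      norm_integral_le_of_norm_le_const (ae_of_all _ fun t => hFb (t, ω))
    _ = rkU := by rw [hνuniv]; simp
  have hmb : ∀ t, ‖m t‖ ≤ rkU := by
    intro t
    calc ‖m t‖ ≤ rkU * (μ Set.univ).toReal :=
      norm_integral_le_of_norm_le_const (ae_of_all _ fun ω => hFb (t, ω))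
    _ = rkU := by simp
  -- sliced integrability
  have hFint_nu : ∀ ω, Integrable (fun t => F (t, ω)) ν :=
    fun ω => ⟨(hFslice ω).aestronglyMeasurable,
      HasFiniteIntegral.of_bounded (ae_of_all _ fun t => hFb (t, ω))⟩
  have hmint : Integrable m ν :=
    ⟨hmmeas.aestronglyMeasurable, HasFiniteIntegral.of_bounded (ae_of_all _ fun t => hmb t)⟩
  have hYint : Integrable Y μ :=
    ⟨hYmeas.aestronglyMeasurable, HasFiniteIntegral.of_bounded (ae_of_all _ fun ω => hYb ω)⟩
  -- a.e. costs are in (0,1)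
  have hae : ∀ᵐ ω ∂μ, ∀ a, X a ω ∈ Set.Ioo (0:ℝ) 1 := by
    rw [ae_all_iff]
    intro a
    rw [ae_iff]
    have : {ω | ¬ X a ω ∈ Set.Ioo (0:ℝ) 1} = (X a) ⁻¹' (Set.Ioo (0:ℝ) 1)ᶜ := rfl
    rw [this, ← Measure.map_apply (hX a) measurableSet_Ioo.compl, hdist a,
      Measure.restrict_apply measurableSet_Ioo.compl]
    simp
  -- Cstar equals rkU - Y a.e.
  have hCae : CstarR =ᵐ[μ] fun ω => rkU - Y ω := by
    filter_upwards [hae] with ω hω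
    simp only [hCstar]
    rw [cstar_toReal_eq M (fun a => X a ω) hω]
    congr 1
    rw [intervalIntegral.integral_of_le zero_le_one]
  -- LHS
  set IY : ℝ := ∫ ω, Y ω ∂μ with hIY
  have hmem : MemLp (fun ω => rkU - Y ω) 2 μ := by
    apply MemLp.mono_exponent (q := ⊤) _ le_top
    apply memLp_top_of_bound
      ((measurable_const.sub hYmeas.measurable).aestronglyMeasurable) (rkU + rkU)
    apply ae_of_all
    intro ω
    calc ‖rkU - Y ω‖ ≤ ‖rkU‖ + ‖Y ω‖ := norm_sub_le _ _
    _ ≤ rkU + rkU := by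
        have := hYb ω
        rw [Real.norm_eq_abs, abs_of_nonneg hrkU0]
        linarith
  have hLHS : variance CstarR μ = ∫ ω, (Y ω - IY) ^ 2 ∂μ := by
    rw [variance_congr_ae hCae, variance_eq_integral hmem.aestronglyMeasurable.aemeasurable]
    have hEint : ∫ ω, (rkU - Y ω) ∂μ = rkU - IY := by
      rw [integral_sub (integrable_const _) hYint]
      simp [hIY]
    apply integral_congr_ae
    apply ae_of_all
    intro ω
    simp only [Pi.pow_apply, Pi.sub_apply]
    rw [hEint]
    ring
  rw [hLHS]
  -- RHS
  have hRm : ∀ s : ℝ, (∫ ω', (M.rk (Aset (fun a => X a ω') s) : ℝ) ∂μ) = m s := fun s => rfl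
  have hRHSrw : (∫ s in (0:ℝ)..1, ∫ t in (0:ℝ)..1,
        ∫ ω, ((M.rk (Aset (fun a => X a ω) s) : ℝ) - ∫ ω', (M.rk (Aset (fun a => X a ω') s) : ℝ) ∂μ)
          * ((M.rk (Aset (fun a => X a ω) t) : ℝ) - ∫ ω', (M.rk (Aset (fun a => X a ω') t) : ℝ) ∂μ) ∂μ)
      = ∫ s, ∫ t, (∫ ω, (F (s, ω) - m s) * (F (t, ω) - m t) ∂μ) ∂ν ∂ν := by
    rw [intervalIntegral.integral_of_le zero_le_one]
    apply integral_congr_ae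
    apply ae_of_all
    intro s
    dsimp only
    rw [intervalIntegral.integral_of_le zero_le_one]
  rw [hRHSrw]
  -- now Fubini steps
  set Im : ℝ := ∫ t, m t ∂ν with hIm
  have hFint_prod : Integrable F (ν.prod μ) :=
    ⟨hFmeas.aestronglyMeasurable, HasFiniteIntegral.of_bounded (ae_of_all _ fun p => hFb p)⟩
  have hImIY : Im = IY := by
    calc Im = ∫ t, ∫ ω, F (t, ω) ∂μ ∂ν := rfl
    _ = ∫ ω, ∫ t, F (t, ω) ∂ν ∂μ :=
        integral_integral_swap (f := fun t ω => F (t, ω)) (by exact hFint_prod)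
    _ = IY := rfl
  have hImb : ‖Im‖ ≤ rkU := by
    calc ‖Im‖ ≤ rkU * (ν Set.univ).toReal :=
      norm_integral_le_of_norm_le_const (ae_of_all _ fun t => hmb t)
    _ = rkU := by rw [hνuniv]; simp
  have hGb : ∀ p : ℝ × Ω, ‖F p - m p.1‖ ≤ rkU + rkU := by
    intro p
    calc ‖F p - m p.1‖ ≤ ‖F p‖ + ‖m p.1‖ := norm_sub_le _ _
    _ ≤ rkU + rkU := add_le_add (hFb p) (hmb p.1)
  have hGmeas : Measurable (fun p : ℝ × Ω => F p - m p.1) :=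
    hFmeas.sub (hmmeas.measurable.comp measurable_fst)
  -- inner Fubini
  have hinner : ∀ s : ℝ,
      (∫ t, (∫ ω, (F (s, ω) - m s) * (F (t, ω) - m t) ∂μ) ∂ν)
        = ∫ ω, (F (s, ω) - m s) * (Y ω - Im) ∂μ := by
    intro s
    have hmeas1 : Measurable (fun p : ℝ × Ω => (F (s, p.2) - m s) * (F p - m p.1)) := by
      apply Measurable.mul
      · exact ((hFmeas.comp (measurable_const.prodMk measurable_snd)).sub measurable_const)
      · exact hGmeas
    have h1 : Integrable (Function.uncurry fun t ω => (F (s, ω) - m s) * (F (t, ω) - m t))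
        (ν.prod μ) := by
      refine ⟨hmeas1.aestronglyMeasurable,
        HasFiniteIntegral.of_bounded (C := (rkU + rkU) * (rkU + rkU)) (ae_of_all _ fun p => ?_)⟩
      show ‖(F (s, p.2) - m s) * (F p - m p.1)‖ ≤ _
      rw [norm_mul]
      exact mul_le_mul (hGb (s, p.2)) (hGb p) (norm_nonneg _) (by positivity)
    calc (∫ t, (∫ ω, (F (s, ω) - m s) * (F (t, ω) - m t) ∂μ) ∂ν)
        = ∫ ω, (∫ t, (F (s, ω) - m s) * (F (t, ω) - m t) ∂ν) ∂μ :=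
          integral_integral_swap h1
    _ = ∫ ω, (F (s, ω) - m s) * (∫ t, (F (t, ω) - m t) ∂ν) ∂μ := by
          apply integral_congr_ae
          apply ae_of_all
          intro ω
          exact integral_const_mul _ _
    _ = ∫ ω, (F (s, ω) - m s) * (Y ω - Im) ∂μ := by
          apply integral_congr_ae
          apply ae_of_all
          intro ω
          dsimp only
          congr 1
          rw [integral_sub (hFint_nu ω) hmint]
  have houter :
      (∫ s, (∫ ω, (F (s, ω) - m s) * (Y ω - Im) ∂μ) ∂ν)
        = ∫ ω, (Y ω - Im) * (Y ω - Im) ∂μ := by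
    have hmeas2 : Measurable (fun p : ℝ × Ω => (F p - m p.1) * (Y p.2 - Im)) := by
      apply Measurable.mul hGmeas
      exact (hYmeas.measurable.sub measurable_const).comp measurable_snd
    have h2 : Integrable (Function.uncurry fun s ω => (F (s, ω) - m s) * (Y ω - Im))
        (ν.prod μ) := by
      refine ⟨hmeas2.aestronglyMeasurable,
        HasFiniteIntegral.of_bounded (C := (rkU + rkU) * (rkU + rkU)) (ae_of_all _ fun p => ?_)⟩
      show ‖(F p - m p.1) * (Y p.2 - Im)‖ ≤ _
      rw [norm_mul]
      apply mul_le_mul (hGb p) _ (norm_nonneg _) (by positivity)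
      calc ‖Y p.2 - Im‖ ≤ ‖Y p.2‖ + ‖Im‖ := norm_sub_le _ _
      _ ≤ rkU + rkU := add_le_add (hYb p.2) hImb
    calc (∫ s, (∫ ω, (F (s, ω) - m s) * (Y ω - Im) ∂μ) ∂ν)
        = ∫ ω, (∫ s, (F (s, ω) - m s) * (Y ω - Im) ∂ν) ∂μ :=
          integral_integral_swap h2
    _ = ∫ ω, (∫ s, (F (s, ω) - m s) ∂ν) * (Y ω - Im) ∂μ := by
          apply integral_congr_ae
          apply ae_of_all
          intro ω
          exact integral_mul_const _ _
    _ = ∫ ω, (Y ω - Im) * (Y ω - Im) ∂μ := by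
          apply integral_congr_ae
          apply ae_of_all
          intro ω
          dsimp only
          congr 1
          rw [integral_sub (hFint_nu ω) hmint]
  calc ∫ ω, (Y ω - IY) ^ 2 ∂μ
      = ∫ ω, (Y ω - Im) * (Y ω - Im) ∂μ := by
        apply integral_congr_ae
        apply ae_of_all
        intro ω
        rw [hImIY]
        ring
  _ = ∫ s, (∫ ω, (F (s, ω) - m s) * (Y ω - Im) ∂μ) ∂ν := houter.symm
  _ = ∫ s, ∫ t, (∫ ω, (F (s, ω) - m s) * (F (t, ω) - m t) ∂μ) ∂ν ∂ν := by
        apply integral_congr_ae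
        apply ae_of_all
        intro s
        exact (hinner s).symm
end

section
/- Let M be a bridgeless matroid with arbitrary costs, S* a minimum basis, and F ⊆ S*. Then for every a ∈ F, the VCG threshold satisfies v(I,a) = V(F,a), where V(F,a) = c*(I^{0,∞}_{F∖{a}, {a}}) − c*(I^0_F) is the extended VCG threshold. In particular, the VCG payments for items in F depend only on the costs of items outside F. -/
open MeasureTheory ProbabilityTheory ENNReal
open scoped BigOperators

variable {A : Type*} [Fintype A] [DecidableEq A]

/-- The cost function with all costs in `F` set to `0` and all costs in `E` set to `∞`. -/
noncomputable def setCosts (c : A → ℝ≥0∞) (F E : Finset A) : A → ℝ≥0∞ :=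
  fun a => if a ∈ E then ⊤ else if a ∈ F then 0 else c a

/-- The extended VCG threshold `V(F,a) = c*(I^{0,∞}_{F∖{a},{a}}) - c*(I^0_F)`. -/
noncomputable def extVth (SS : Finset (Finset A)) (c : A → ℝ≥0∞) (F : Finset A)
    (a : A) : ℝ≥0∞ :=
  cstar SS (setCosts c (F.erase a) {a}) - cstar SS (setCosts c F ∅)

set_option linter.unusedSectionVars false

set_option maxHeartbeats 1000000

namespace VCGAux

variable (M : RankMatroid A)

lemma rk_insert_le (X : Finset A) (x : A) : M.rk (insert x X) ≤ M.rk X + 1 := by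
  have h := M.rk_submodular X {x}
  have h1 : X ∪ {x} = insert x X := by ext y; simp [or_comm]
  have h2 : M.rk {x} ≤ 1 := (M.rk_le_card {x}).trans (by simp)
  rw [h1] at h
  omega

lemma indep_subset {I J : Finset A} (h : I ⊆ J) (hJ : M.Indep J) : M.Indep I := by
  have key : ∀ K : Finset A, M.rk (I ∪ K) ≤ M.rk I + K.card := by
    intro K
    induction K using Finset.induction_on with
    | empty => simp
    | @insert x K hx ih =>
      have : I ∪ insert x K = insert x (I ∪ K) := by ext y; simp; try tauto
      rw [this, Finset.card_insert_of_notMem hx]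
      calc M.rk (insert x (I ∪ K)) ≤ M.rk (I ∪ K) + 1 := rk_insert_le M _ _
        _ ≤ M.rk I + K.card + 1 := by omega
  have h1 := key (J \ I)
  rw [Finset.union_sdiff_of_subset h] at h1
  have h2 := Finset.card_sdiff_of_subset h
  have h3 := M.rk_le_card I
  have h4 := Finset.card_le_card h
  unfold RankMatroid.Indep at *
  omega

lemma rk_absorb {Y : Finset A} {Z : Finset A}
    (h : ∀ x ∈ Z, M.rk (insert x Y) = M.rk Y) : M.rk (Y ∪ Z) = M.rk Y := by
  induction Z using Finset.induction_on with
  | empty => simp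
  | @insert x Z hx ih =>
    have hZ : M.rk (Y ∪ Z) = M.rk Y := ih (fun y hy => h y (Finset.mem_insert_of_mem hy))
    have hsub := M.rk_submodular (Y ∪ Z) (insert x Y)
    have hu : (Y ∪ Z) ∪ insert x Y = insert x (Y ∪ Z) := by ext y; simp; try tauto
    have hi : Y ⊆ (Y ∪ Z) ∩ insert x Y := by
      intro y hy; simp [hy]
    have hi' := M.rk_mono hi
    rw [hu, hZ, h x (Finset.mem_insert_self x Z)] at hsub
    have hY : Y ∪ insert x Z = insert x (Y ∪ Z) := by ext y; simp; try tauto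
    rw [hY]
    have hge : M.rk Y ≤ M.rk (insert x (Y ∪ Z)) :=
      hZ ▸ M.rk_mono (Finset.subset_insert _ _)
    omega

lemma extend : ∀ (n : ℕ) (I X : Finset A), I ⊆ X → M.Indep I → M.rk X ≤ I.card + n →
    ∃ J, I ⊆ J ∧ J ⊆ X ∧ M.Indep J ∧ J.card = M.rk X := by
  intro n
  induction n with
  | zero =>
    intro I X hIX hI h
    refine ⟨I, Finset.Subset.refl I, hIX, hI, ?_⟩
    have := M.rk_mono hIX
    unfold RankMatroid.Indep at hI
    omega
  | succ n ih =>
    intro I X hIX hI h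
    by_cases hcard : M.rk X ≤ I.card
    · refine ⟨I, Finset.Subset.refl I, hIX, hI, ?_⟩
      have := M.rk_mono hIX
      unfold RankMatroid.Indep at hI
      omega
    · have hx : ∃ x ∈ X, x ∉ I ∧ M.rk (insert x I) = I.card + 1 := by
        by_contra hno
        push_neg at hno
        have habs : ∀ x ∈ X, M.rk (insert x I) = M.rk I := by
          intro x hxX
          by_cases hxI : x ∈ I
          · rw [Finset.insert_eq_self.2 hxI]
          · have h1 : M.rk (insert x I) ≤ M.rk I + 1 := rk_insert_le M _ _
            have h2 : M.rk I ≤ M.rk (insert x I) := M.rk_mono (Finset.subset_insert _ _)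
            have h3 := hno x hxX hxI
            unfold RankMatroid.Indep at hI
            omega
        have h4 := rk_absorb M habs
        have h5 : M.rk X ≤ M.rk (I ∪ X) := M.rk_mono Finset.subset_union_right
        unfold RankMatroid.Indep at hI
        omega
      obtain ⟨x, hxX, hxI, hrk⟩ := hx
      have hIx : M.Indep (insert x I) := by
        unfold RankMatroid.Indep
        rw [hrk, Finset.card_insert_of_notMem hxI]
      have hsub : insert x I ⊆ X := Finset.insert_subset hxX hIX
      have hcard' : M.rk X ≤ (insert x I).card + n := by
        rw [Finset.card_insert_of_notMem hxI]; omega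
      obtain ⟨J, hJ1, hJ2, hJ3, hJ4⟩ := ih (insert x I) X hsub hIx hcard'
      exact ⟨J, (Finset.subset_insert x I).trans hJ1, hJ2, hJ3, hJ4⟩

lemma mem_bases_iff {S : Finset A} :
    S ∈ M.bases ↔ M.Indep S ∧ M.rk S = M.rk Finset.univ := by
  unfold RankMatroid.bases RankMatroid.Indep
  simp

lemma bases_card {S : Finset A} (h : S ∈ M.bases) : S.card = M.rk Finset.univ := by
  rw [mem_bases_iff] at h
  unfold RankMatroid.Indep at h
  omega

lemma exists_basis_avoiding (hM : M.Bridgeless) (a : A) :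
    ∃ B, B ∈ M.bases ∧ a ∉ B := by
  have h0 : M.Indep (∅ : Finset A) := by
    unfold RankMatroid.Indep
    have := M.rk_le_card (∅ : Finset A)
    simpa using this
  obtain ⟨J, -, hJX, hJind, hJcard⟩ :=
    extend M (M.rk (Finset.univ.erase a)) ∅ (Finset.univ.erase a)
      (Finset.empty_subset _) h0 (by simp)
  refine ⟨J, ?_, fun haJ => by simpa using hJX haJ⟩
  rw [mem_bases_iff]
  rw [hM a] at hJcard
  unfold RankMatroid.Indep at *
  constructor
  · exact hJind
  · omega

lemma exchange_aux {B : Finset A} (hB : B ∈ M.bases) {e : A} (he : e ∉ B) :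
    ∀ N : Finset A, N ⊆ B →
      (∀ f ∈ N, M.rk (insert e (B.erase f)) ≠ M.rk Finset.univ) →
      M.rk (insert e (B \ N)) + N.card = M.rk Finset.univ := by
  intro N
  induction N using Finset.induction_on with
  | empty =>
    intro _ _
    simp only [Finset.sdiff_empty, Finset.card_empty, add_zero]
    have h1 : M.rk B ≤ M.rk (insert e B) := M.rk_mono (Finset.subset_insert _ _)
    have h2 : M.rk (insert e B) ≤ M.rk Finset.univ := M.rk_mono (Finset.subset_univ _)
    have h3 : M.rk B = M.rk Finset.univ := ((mem_bases_iff M).1 hB).2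
    omega
  | @insert f N' hf ih =>
    intro hsub hbad
    have hfB : f ∈ B := hsub (Finset.mem_insert_self _ _)
    have hN'B : N' ⊆ B := (Finset.subset_insert _ _).trans hsub
    have IH := ih hN'B (fun g hg => hbad g (Finset.mem_insert_of_mem hg))
    have hBr : B.card = M.rk Finset.univ := bases_card M hB
    have hBind : M.Indep B := ((mem_bases_iff M).1 hB).1
    have herase_ind : M.Indep (B.erase f) := indep_subset M (Finset.erase_subset _ _) hBind
    have herase_card : (B.erase f).card + 1 = B.card := by
      rw [Finset.card_erase_of_mem hfB]
      have : 1 ≤ B.card := Finset.card_pos.2 ⟨f, hfB⟩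
      omega
    have hUle : M.rk (insert e (B.erase f)) ≤ M.rk (B.erase f) + 1 := rk_insert_le M _ _
    have hUge : M.rk (B.erase f) ≤ M.rk (insert e (B.erase f)) := M.rk_mono (Finset.subset_insert _ _)
    have hUne := hbad f (Finset.mem_insert_self _ _)
    have hU : M.rk (insert e (B.erase f)) + 1 = M.rk Finset.univ := by
      unfold RankMatroid.Indep at herase_ind
      omega
    have hsubm := M.rk_submodular (insert e (B.erase f)) (insert e (B \ N'))
    have hBuv : B ⊆ (insert e (B.erase f)) ∪ (insert e (B \ N')) := by
      intro x hx
      by_cases hxf : x = f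
      · subst hxf
        exact Finset.mem_union_right _ (Finset.mem_insert_of_mem (Finset.mem_sdiff.2 ⟨hx, hf⟩))
      · exact Finset.mem_union_left _ (Finset.mem_insert_of_mem (Finset.mem_erase.2 ⟨hxf, hx⟩))
    have huge : M.rk Finset.univ ≤ M.rk ((insert e (B.erase f)) ∪ (insert e (B \ N'))) := by
      have := M.rk_mono hBuv
      have h3 : M.rk B = M.rk Finset.univ := ((mem_bases_iff M).1 hB).2
      omega
    have hW : insert e (B \ insert f N') ⊆ (insert e (B.erase f)) ∩ (insert e (B \ N')) := by
      intro x hx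
      rcases Finset.mem_insert.1 hx with hxe | hxm
      · subst hxe; simp
      · have hxB := (Finset.mem_sdiff.1 hxm).1
        have hxN := (Finset.mem_sdiff.1 hxm).2
        have hxf : x ≠ f := fun h => hxN (h ▸ Finset.mem_insert_self _ _)
        have hxN' : x ∉ N' := fun h => hxN (Finset.mem_insert_of_mem h)
        exact Finset.mem_inter.2 ⟨Finset.mem_insert_of_mem (Finset.mem_erase.2 ⟨hxf, hxB⟩),
          Finset.mem_insert_of_mem (Finset.mem_sdiff.2 ⟨hxB, hxN'⟩)⟩
    have hWrk := M.rk_mono hW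
    have hWind : M.Indep (B \ insert f N') := indep_subset M (Finset.sdiff_subset) hBind
    have hWge : M.rk (B \ insert f N') ≤ M.rk (insert e (B \ insert f N')) :=
      M.rk_mono (Finset.subset_insert _ _)
    have hWcard : (B \ insert f N').card + (insert f N').card = B.card := by
      rw [Finset.card_sdiff_of_subset hsub]
      have := Finset.card_le_card hsub
      omega
    have hcardins : (insert f N').card = N'.card + 1 := Finset.card_insert_of_notMem hf
    unfold RankMatroid.Indep at hWind
    omega

lemma exchange {B S : Finset A} (hB : B ∈ M.bases) (hS : S ∈ M.bases) {e : A}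
    (heS : e ∈ S) (heB : e ∉ B) :
    ∃ f ∈ B, f ∉ S ∧ insert e (B.erase f) ∈ M.bases ∧ insert f (S.erase e) ∈ M.bases := by
  classical
  set r := M.rk Finset.univ with hr
  set K : Finset A := B.filter (fun f => M.rk (insert e (B.erase f)) = r) with hK
  set N : Finset A := B.filter (fun f => ¬ (M.rk (insert e (B.erase f)) = r)) with hN
  have hNB : N ⊆ B := Finset.filter_subset _ _
  have hNbad : ∀ f ∈ N, M.rk (insert e (B.erase f)) ≠ r := by
    intro f hfN; exact (Finset.mem_filter.1 hfN).2
  have haux := exchange_aux M hB heB N hNB hNbad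
  have hBN : B \ N = K := by
    ext x
    simp only [hN, hK, Finset.mem_sdiff, Finset.mem_filter]
    tauto
  rw [hBN] at haux
  have hKB : K ⊆ B := Finset.filter_subset _ _
  have hKcard : K.card + N.card = B.card := by
    rw [hK, hN]
    exact Finset.card_filter_add_card_filter_not _
  have hBr : B.card = r := bases_card M hB
  have hSr : S.card = r := bases_card M hS
  have hKind : M.Indep K := indep_subset M hKB ((mem_bases_iff M).1 hB).1
  have hSind : M.Indep S := ((mem_bases_iff M).1 hS).1
  have hSe_ind : M.Indep (S.erase e) := indep_subset M (Finset.erase_subset _ _) hSind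
  have hSe_card : (S.erase e).card + 1 = r := by
    rw [Finset.card_erase_of_mem heS]
    have : 1 ≤ S.card := Finset.card_pos.2 ⟨e, heS⟩
    omega
  -- rk (insert e K) = K.card
  have hIeK : M.rk (insert e K) = K.card := by omega
  -- find f ∈ K with rk (insert f (S.erase e)) = r
  have hf : ∃ f ∈ K, M.rk (insert f (S.erase e)) = r := by
    by_contra hno
    push_neg at hno
    have habs : ∀ x ∈ K, M.rk (insert x (S.erase e)) = M.rk (S.erase e) := by
      intro x hx
      have h1 := rk_insert_le M (S.erase e) x
      have h2 : M.rk (S.erase e) ≤ M.rk (insert x (S.erase e)) := M.rk_mono (Finset.subset_insert _ _)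
      have h3 := hno x hx
      unfold RankMatroid.Indep at hSe_ind
      omega
    have habs2 := rk_absorb M habs
    have hsubm := M.rk_submodular (S.erase e ∪ K) (insert e K)
    have hu : S ⊆ (S.erase e ∪ K) ∪ insert e K := by
      intro x hx
      by_cases hxe : x = e
      · subst hxe; exact Finset.mem_union_right _ (Finset.mem_insert_self _ _)
      · exact Finset.mem_union_left _ (Finset.mem_union_left _ (Finset.mem_erase.2 ⟨hxe, hx⟩))
    have hu' : r ≤ M.rk ((S.erase e ∪ K) ∪ insert e K) := by
      have h4 := M.rk_mono hu
      unfold RankMatroid.Indep at hSind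
      omega
    have hi : K ⊆ (S.erase e ∪ K) ∩ insert e K := by
      intro x hx
      exact Finset.mem_inter.2 ⟨Finset.mem_union_right _ hx, Finset.mem_insert_of_mem hx⟩
    have hi' := M.rk_mono hi
    have h5 : M.rk (insert e K) = K.card := hIeK
    unfold RankMatroid.Indep at hKind hSe_ind
    omega
  obtain ⟨f, hfK, hfS⟩ := hf
  have hfB : f ∈ B := hKB hfK
  have hfrk : M.rk (insert e (B.erase f)) = r := (Finset.mem_filter.1 hfK).2
  have hfe : f ≠ e := fun h => heB (h ▸ hfB)
  have hfnS : f ∉ S := by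
    intro hfSmem
    have : f ∈ S.erase e := Finset.mem_erase.2 ⟨hfe, hfSmem⟩
    rw [Finset.insert_eq_self.2 this] at hfS
    unfold RankMatroid.Indep at hSe_ind
    omega
  refine ⟨f, hfB, hfnS, ?_, ?_⟩
  · rw [mem_bases_iff]
    have hcard : (insert e (B.erase f)).card = r := by
      rw [Finset.card_insert_of_notMem (fun h => heB (Finset.erase_subset _ _ h)),
        Finset.card_erase_of_mem hfB]
      have : 1 ≤ B.card := Finset.card_pos.2 ⟨f, hfB⟩
      omega
    exact ⟨by unfold RankMatroid.Indep; omega, by omega⟩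
  · rw [mem_bases_iff]
    have hcard : (insert f (S.erase e)).card = r := by
      rw [Finset.card_insert_of_notMem (fun h => hfnS (Finset.erase_subset _ _ h))]
      omega
    exact ⟨by unfold RankMatroid.Indep; omega, by omega⟩

lemma structCost_ne_top {c : A → ℝ≥0∞} (hc : ∀ x, c x ≠ ⊤) (S : Finset A) :
    structCost c S ≠ ⊤ :=
  (ENNReal.sum_lt_top.mpr (fun x _ => lt_top_iff_ne_top.2 (hc x))).ne

lemma min_avoiding (c : A → ℝ≥0∞) (hc : ∀ x, c x ≠ ⊤) {Sstar : Finset A}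
    (hSb : Sstar ∈ M.bases) (hSmin : ∀ T ∈ M.bases, structCost c Sstar ≤ structCost c T)
    (a : A) :
    ∀ (n : ℕ) (B : Finset A), B ∈ M.bases → a ∉ B → ((Sstar.erase a) \ B).card ≤ n →
    ∃ B', B' ∈ M.bases ∧ a ∉ B' ∧ Sstar.erase a ⊆ B' ∧
      structCost c B' ≤ structCost c B := by
  intro n
  induction n with
  | zero =>
    intro B hB haB hcard
    have hdiff : (Sstar.erase a) \ B = ∅ :=
      Finset.card_eq_zero.1 (le_antisymm hcard (Nat.zero_le _))
    exact ⟨B, hB, haB, Finset.sdiff_eq_empty_iff_subset.1 hdiff, le_refl _⟩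
  | succ n ih =>
    intro B hB haB hcard
    by_cases hsub : Sstar.erase a ⊆ B
    · exact ⟨B, hB, haB, hsub, le_refl _⟩
    · obtain ⟨e, he⟩ := Finset.nonempty_iff_ne_empty.2
        (fun h => hsub (Finset.sdiff_eq_empty_iff_subset.1 h))
      have heSa : e ∈ Sstar.erase a := (Finset.mem_sdiff.1 he).1
      have heB : e ∉ B := (Finset.mem_sdiff.1 he).2
      have heS : e ∈ Sstar := Finset.mem_of_mem_erase heSa
      have hea : e ≠ a := Finset.ne_of_mem_erase heSa
      obtain ⟨f, hfB, hfS, hB2, hS2⟩ := exchange M hB hSb heS heB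
      have hX : structCost c (Sstar.erase e) ≠ ⊤ := structCost_ne_top hc _
      have hce : c e ≤ c f := by
        have h1 := hSmin _ hS2
        have hfnSe : f ∉ Sstar.erase e := fun h => hfS (Finset.mem_of_mem_erase h)
        unfold structCost at h1
        rw [Finset.sum_insert hfnSe, ← Finset.add_sum_erase _ c heS] at h1
        rw [add_comm (c e) _, add_comm (c f) _] at h1
        exact (ENNReal.add_le_add_iff_left hX).1 h1
      have henB : e ∉ B.erase f := fun h => heB (Finset.mem_of_mem_erase h)
      have hcost : structCost c (insert e (B.erase f)) ≤ structCost c B := by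
        unfold structCost
        rw [Finset.sum_insert henB, ← Finset.add_sum_erase _ c hfB]
        exact add_le_add_left hce _
      have haB2 : a ∉ insert e (B.erase f) := by
        intro h
        rcases Finset.mem_insert.1 h with h | h
        · exact hea h.symm
        · exact haB (Finset.mem_of_mem_erase h)
      have hdiffsub : (Sstar.erase a) \ (insert e (B.erase f)) ⊆
          ((Sstar.erase a) \ B).erase e := by
        intro x hx
        have hx1 : x ∈ Sstar.erase a := (Finset.mem_sdiff.1 hx).1
        have hx2 : x ∉ insert e (B.erase f) := (Finset.mem_sdiff.1 hx).2
        have hxe : x ≠ e := fun h => hx2 (h ▸ Finset.mem_insert_self _ _)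
        have hxB : x ∉ B := by
          intro hxB
          have hxf : x ≠ f := fun h => hfS (h ▸ Finset.mem_of_mem_erase hx1)
          exact hx2 (Finset.mem_insert_of_mem (Finset.mem_erase.2 ⟨hxf, hxB⟩))
        exact Finset.mem_erase.2 ⟨hxe, Finset.mem_sdiff.2 ⟨hx1, hxB⟩⟩
      have hdcard : ((Sstar.erase a) \ (insert e (B.erase f))).card ≤ n := by
        have h1 := Finset.card_le_card hdiffsub
        have h2 : (((Sstar.erase a) \ B).erase e).card = ((Sstar.erase a) \ B).card - 1 :=
          Finset.card_erase_of_mem he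
        have h3 : 1 ≤ ((Sstar.erase a) \ B).card := Finset.card_pos.2 ⟨e, he⟩
        omega
      obtain ⟨B', hB'1, hB'2, hB'3, hB'4⟩ := ih _ hB2 haB2 hdcard
      exact ⟨B', hB'1, hB'2, hB'3, hB'4.trans hcost⟩

lemma cstar_le {SS : Finset (Finset A)} {c : A → ℝ≥0∞} {S : Finset A} (h : S ∈ SS) :
    cstar SS c ≤ structCost c S := iInf₂_le S h

lemma cstar_eq {SS : Finset (Finset A)} {c : A → ℝ≥0∞} {S : Finset A} (h : S ∈ SS)
    (hmin : ∀ T ∈ SS, structCost c S ≤ structCost c T) :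
    cstar SS c = structCost c S :=
  le_antisymm (cstar_le h) (le_iInf₂ hmin)

lemma sub_helper (x y g : ℝ≥0∞) (hg : g ≠ ⊤) : (x + g) - (y + g) = x - y := by
  rw [tsub_add_eq_tsub_tsub, tsub_right_comm, ENNReal.add_sub_cancel_right hg]

lemma structCost_congr {c d : A → ℝ≥0∞} {S : Finset A} (h : ∀ x ∈ S, c x = d x) :
    structCost c S = structCost d S := Finset.sum_congr rfl h

lemma structCost_top_mem {c : A → ℝ≥0∞} {S : Finset A} {x : A} (hx : x ∈ S) (h : c x = ⊤) :
    structCost c S = ⊤ := ENNReal.sum_eq_top.2 ⟨x, hx, h⟩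

lemma structCost_sdiff {c : A → ℝ≥0∞} {F S : Finset A} (h : F ⊆ S) :
    structCost c (S \ F) + structCost c F = structCost c S := Finset.sum_sdiff h

lemma structCost_inter_diff (c : A → ℝ≥0∞) (S T : Finset A) :
    structCost c (S ∩ T) + structCost c (S \ T) = structCost c S :=
  Finset.sum_inter_add_sum_sdiff S T c

lemma structCost_mono {c : A → ℝ≥0∞} {S T : Finset A} (h : S ⊆ T) :
    structCost c S ≤ structCost c T := Finset.sum_le_sum_of_subset h

end VCGAux


/-- For a bridgeless matroid, a minimum basis `S*` and `F ⊆ S*`, the VCG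
threshold of every `a ∈ F` equals the extended VCG threshold `V(F,a)`; in particular,
the VCG payments for items of `F` depend only on the costs of items outside `F`. -/
theorem extended_vcg_threshold_eq
    (M : RankMatroid A) (hM : M.Bridgeless)
    (c : A → ℝ≥0∞) (hc : ∀ a, c a ≠ ⊤)
    (Sstar : Finset A) (hS : IsMinStruct M.bases c Sstar)
    (F : Finset A) (hF : F ⊆ Sstar) :
    (∀ a ∈ F, vth M.bases c a = extVth M.bases c F a) ∧
    (∀ c' : A → ℝ≥0∞, (∀ b ∉ F, c' b = c b) →
      ∀ a ∈ F, extVth M.bases c' F a = extVth M.bases c F a) := by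
  classical
  obtain ⟨hSb, hSmin⟩ := hS
  constructor
  · intro a ha
    have haS : a ∈ Sstar := hF ha
    obtain ⟨B0, hB0, haB0⟩ := VCGAux.exists_basis_avoiding M hM a
    obtain ⟨B1, hB1mem, hB1min⟩ := Finset.exists_min_image
      (M.bases.filter (fun T => a ∉ T)) (structCost c)
      ⟨B0, Finset.mem_filter.2 ⟨hB0, haB0⟩⟩
    have hB1b := (Finset.mem_filter.1 hB1mem).1
    have haB1 := (Finset.mem_filter.1 hB1mem).2
    obtain ⟨B, hBb, haB, hSsub, hBcost⟩ :=
      VCGAux.min_avoiding M c hc hSb hSmin a _ B1 hB1b haB1 le_rfl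
    have hBmin : ∀ T ∈ M.bases, a ∉ T → structCost c B ≤ structCost c T := fun T hT haT =>
      hBcost.trans (hB1min T (Finset.mem_filter.2 ⟨hT, haT⟩))
    set G := F.erase a with hGdef
    have hGS : G ⊆ Sstar.erase a := by
      intro x hx
      rw [hGdef] at hx
      exact Finset.mem_erase.2 ⟨Finset.ne_of_mem_erase hx, hF (Finset.mem_of_mem_erase hx)⟩
    have hGB : G ⊆ B := hGS.trans hSsub
    have hGtop : structCost c G ≠ ⊤ := VCGAux.structCost_ne_top hc G
    have hset : ∀ (d : A → ℝ≥0∞) (F' E' T : Finset A), (∀ x ∈ T, x ∉ E') →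
        structCost (setCosts d F' E') T = structCost d (T \ F') := by
      intro d F' E' T hE
      unfold structCost setCosts
      rw [← Finset.sum_inter_add_sum_sdiff T F' _]
      have hz : (∑ x ∈ T ∩ F', (if x ∈ E' then (⊤ : ℝ≥0∞) else if x ∈ F' then 0 else d x)) = 0 := by
        apply Finset.sum_eq_zero
        intro x hx
        have hx1 := Finset.mem_inter.1 hx
        rw [if_neg (hE x hx1.1), if_pos hx1.2]
      rw [hz, zero_add]
      apply Finset.sum_congr rfl
      intro x hx
      have hx1 := Finset.mem_sdiff.1 hx
      rw [if_neg (hE x hx1.1), if_neg hx1.2]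
    have h1 : cstar M.bases (Function.update c a ⊤) = structCost c B := by
      have heq : structCost (Function.update c a ⊤) B = structCost c B :=
        VCGAux.structCost_congr (fun x hx => Function.update_of_ne (ne_of_mem_of_not_mem hx haB) _ _)
      rw [← heq]
      apply VCGAux.cstar_eq hBb
      intro T hT
      by_cases haT : a ∈ T
      · rw [VCGAux.structCost_top_mem haT (Function.update_self a ⊤ c)]
        exact le_top
      · have heqT : structCost (Function.update c a ⊤) T = structCost c T :=
          VCGAux.structCost_congr (fun x hx => Function.update_of_ne (ne_of_mem_of_not_mem hx haT) _ _)
        rw [heq, heqT]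
        exact hBmin T hT haT
    have hupd0 : ∀ T : Finset A, a ∈ T →
        structCost (Function.update c a 0) T = structCost c (T.erase a) := by
      intro T haT
      unfold structCost
      rw [← Finset.add_sum_erase _ _ haT, Function.update_self, zero_add]
      exact Finset.sum_congr rfl (fun x hx => Function.update_of_ne (Finset.ne_of_mem_erase hx) _ _)
    have h2 : cstar M.bases (Function.update c a 0) = structCost c (Sstar.erase a) := by
      rw [← hupd0 Sstar haS]
      apply VCGAux.cstar_eq hSb
      intro T hT
      by_cases haT : a ∈ T
      · rw [hupd0 Sstar haS, hupd0 T haT]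
        have h5 := hSmin T hT
        unfold structCost at h5 ⊢
        rw [← Finset.add_sum_erase _ c haS, ← Finset.add_sum_erase _ c haT] at h5
        exact (ENNReal.add_le_add_iff_left (hc a)).1 h5
      · have heqT : structCost (Function.update c a 0) T = structCost c T :=
          VCGAux.structCost_congr (fun x hx => Function.update_of_ne (ne_of_mem_of_not_mem hx haT) _ _)
        rw [hupd0 Sstar haS, heqT]
        exact (VCGAux.structCost_mono (Finset.erase_subset _ _)).trans (hSmin T hT)
    have h3 : cstar M.bases (setCosts c F ∅) = structCost c (Sstar \ F) := by
      have hSe : structCost (setCosts c F ∅) Sstar = structCost c (Sstar \ F) :=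
        hset c F ∅ Sstar (by simp)
      rw [← hSe]
      apply VCGAux.cstar_eq hSb
      intro T hT
      rw [hSe, hset c F ∅ T (by simp)]
      have key : structCost c (Sstar \ F) + structCost c F ≤
          structCost c (T \ F) + structCost c F := by
        calc structCost c (Sstar \ F) + structCost c F
            = structCost c Sstar := VCGAux.structCost_sdiff hF
          _ ≤ structCost c T := hSmin T hT
          _ = structCost c (T ∩ F) + structCost c (T \ F) :=
              (VCGAux.structCost_inter_diff c T F).symm
          _ ≤ structCost c F + structCost c (T \ F) :=
              add_le_add_left (VCGAux.structCost_mono Finset.inter_subset_right) _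
          _ = structCost c (T \ F) + structCost c F := add_comm _ _
      exact (ENNReal.add_le_add_iff_right (VCGAux.structCost_ne_top hc F)).1 key
    have h4 : cstar M.bases (setCosts c G {a}) = structCost c (B \ G) := by
      have hBe : structCost (setCosts c G {a}) B = structCost c (B \ G) :=
        hset c G {a} B (fun x hx h => haB ((Finset.mem_singleton.1 h) ▸ hx))
      rw [← hBe]
      apply VCGAux.cstar_eq hBb
      intro T hT
      by_cases haT : a ∈ T
      · rw [VCGAux.structCost_top_mem haT (by simp [setCosts])]
        exact le_top
      · rw [hBe, hset c G {a} T (fun x hx h => haT ((Finset.mem_singleton.1 h) ▸ hx))]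
        have hGind : M.Indep G :=
          VCGAux.indep_subset M (hGS.trans (Finset.erase_subset _ _))
            ((VCGAux.mem_bases_iff M).1 hSb).1
        have hrkGT : M.rk (G ∪ T) ≤ G.card + M.rk Finset.univ :=
          le_trans (M.rk_mono (Finset.subset_univ _)) (Nat.le_add_left _ _)
        obtain ⟨J, hGJ, hJGT, hJind, hJcard⟩ :=
          VCGAux.extend M (M.rk Finset.univ) G (G ∪ T) Finset.subset_union_left hGind hrkGT
        have hrkGTeq : M.rk (G ∪ T) = M.rk Finset.univ := by
          have hle := M.rk_mono (Finset.subset_univ (G ∪ T))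
          have hge := M.rk_mono (Finset.subset_union_right : T ⊆ G ∪ T)
          have hTb := (VCGAux.mem_bases_iff M).1 hT
          have hTr := hTb.2
          omega
        have hJb : J ∈ M.bases := by
          rw [VCGAux.mem_bases_iff]
          refine ⟨hJind, ?_⟩
          unfold RankMatroid.Indep at hJind
          omega
        have haJ : a ∉ J := by
          intro h
          rcases Finset.mem_union.1 (hJGT h) with h' | h'
          · rw [hGdef] at h'
            exact (Finset.notMem_erase a F) h'
          · exact haT h'
        have hcostJ := hBmin J hJb haJ
        have key : structCost c (B \ G) + structCost c G ≤
            structCost c (T \ G) + structCost c G := by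
          calc structCost c (B \ G) + structCost c G
              = structCost c B := VCGAux.structCost_sdiff hGB
            _ ≤ structCost c J := hcostJ
            _ = structCost c (J \ G) + structCost c G := (VCGAux.structCost_sdiff hGJ).symm
            _ ≤ structCost c (T \ G) + structCost c G := by
                refine add_le_add_left (VCGAux.structCost_mono ?_) _
                intro x hx
                have hx1 := Finset.mem_sdiff.1 hx
                rcases Finset.mem_union.1 (hJGT hx1.1) with h' | h'
                · exact absurd h' hx1.2
                · exact Finset.mem_sdiff.2 ⟨h', hx1.2⟩
        exact (ENNReal.add_le_add_iff_right hGtop).1 key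
    have hd : (Sstar.erase a) \ G = Sstar \ F := by
      ext x
      constructor
      · intro hx
        have hx1 := Finset.mem_sdiff.1 hx
        have hxa := Finset.ne_of_mem_erase hx1.1
        have hxS := Finset.mem_of_mem_erase hx1.1
        refine Finset.mem_sdiff.2 ⟨hxS, fun hxF => hx1.2 ?_⟩
        rw [hGdef]
        exact Finset.mem_erase.2 ⟨hxa, hxF⟩
      · intro hx
        have hx1 := Finset.mem_sdiff.1 hx
        have hxa : x ≠ a := fun h => hx1.2 (h ▸ ha)
        refine Finset.mem_sdiff.2 ⟨Finset.mem_erase.2 ⟨hxa, hx1.1⟩, fun hxG => ?_⟩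
        rw [hGdef] at hxG
        exact hx1.2 (Finset.mem_of_mem_erase hxG)
    have e1 : structCost c B = structCost c (B \ G) + structCost c G :=
      (VCGAux.structCost_sdiff hGB).symm
    have e2 : structCost c (Sstar.erase a) = structCost c (Sstar \ F) + structCost c G := by
      rw [← VCGAux.structCost_sdiff hGS, hd]
    rw [vth, extVth, h1, h2, ← hGdef, h4, h3, e1, e2, VCGAux.sub_helper _ _ _ hGtop]
  · intro c' hcc a _
    have h1 : setCosts c' (F.erase a) {a} = setCosts c (F.erase a) {a} := by
      funext b
      unfold setCosts
      by_cases hb1 : b ∈ ({a} : Finset A)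
      · rw [if_pos hb1, if_pos hb1]
      · by_cases hb2 : b ∈ F.erase a
        · rw [if_neg hb1, if_neg hb1, if_pos hb2, if_pos hb2]
        · have hbF : b ∉ F := by
            intro hbF
            have hba : b ≠ a := fun h => hb1 (h ▸ Finset.mem_singleton_self a)
            exact hb2 (Finset.mem_erase.2 ⟨hba, hbF⟩)
          rw [if_neg hb1, if_neg hb1, if_neg hb2, if_neg hb2, hcc b hbF]
    have h2 : setCosts c' F ∅ = setCosts c F ∅ := by
      funext b
      unfold setCosts
      by_cases hb2 : b ∈ F
      · simp [hb2]
      · simp [hb2, hcc b hb2]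
    rw [extVth, extVth, h1, h2]
end
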